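/- arXiv:2112.12325 — 4 statements merged into one kernel-verified Lean document; each statement's English description precedes it below -/
import Mathlib

section
/- Let z : ℝ → EuclideanSpace ℝ (Fin 3) be differentiable with z(t) ≠ 0 for all t ≥ 0 and z'(t) = −Ω(t) ×₃ z(t) − v(t) for all t ≥ 0. Let ξ : ℝ → ℝ be differentiable with ξ'(t) = −⟪y(t), v(t)⟫ for all t ≥ 0, where y(t) := ‖z(t)‖⁻¹ • z(t), and let θ := ‖z(0)‖ − ξ(0). Then for all t ≥ 0, ‖z(t)‖ − ξ(t) = θ, and consequently z(t) = (ξ(t) + θ) • y(t). -/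
/-!
The rotational term `Ω × z` is orthogonal to `z`, so it does not change `‖z‖`: along the flow
`d‖z‖/dt = ⟪z, ż⟫ / ‖z‖ = -⟪y, v⟫ = ξ̇`. Hence `‖z‖ - ξ` is constant on `[0, ∞)`, and
`z = ‖z‖ • y = (ξ + θ) • y`.
-/

open scoped RealInnerProductSpace

/-- Cross product on `EuclideanSpace ℝ (Fin 3)`, transported from Mathlib's
`crossProduct` on `Fin 3 → ℝ`. -/
noncomputable def cross3 (a b : EuclideanSpace ℝ (Fin 3)) : EuclideanSpace ℝ (Fin 3) :=
  (WithLp.equiv 2 (Fin 3 → ℝ)).symm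
    (crossProduct ((WithLp.equiv 2 (Fin 3 → ℝ)) a) ((WithLp.equiv 2 (Fin 3 → ℝ)) b))

theorem HasDerivAt.norm {F : Type*} [NormedAddCommGroup F] [InnerProductSpace ℝ F]
    {f : ℝ → F} {f' : F} {x : ℝ} (hf : HasDerivAt f f' x) (h0 : f x ≠ 0) :
    HasDerivAt (fun t => ‖f t‖) (⟪f x, f'⟫ / ‖f x‖) x := by
  have hsqrt := hf.norm_sq.sqrt (pow_ne_zero 2 (norm_ne_zero_iff.mpr h0))
  simp only [Real.sqrt_sq (norm_nonneg _)] at hsqrt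
  convert hsqrt using 1
  field_simp

theorem inner_cross3_self (a b : EuclideanSpace ℝ (Fin 3)) : ⟪b, cross3 a b⟫ = 0 := by
  have h : ⟪b, cross3 a b⟫ = b.ofLp ⬝ᵥ crossProduct a.ofLp b.ofLp := by
    simp [cross3, PiLp.inner_apply, dotProduct, mul_comm]
  rw [h, dot_cross_self]

theorem hasDerivAt_norm_of_hasDerivAt_neg_cross3_sub {z : ℝ → EuclideanSpace ℝ (Fin 3)}
    {ω w : EuclideanSpace ℝ (Fin 3)} {s : ℝ} (hz : HasDerivAt z (-cross3 ω (z s) - w) s)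
    (h0 : z s ≠ 0) :
    HasDerivAt (fun t => ‖z t‖) (-⟪‖z s‖⁻¹ • z s, w⟫) s := by
  convert hz.norm h0 using 1
  rw [inner_sub_right, inner_neg_right, inner_cross3_self, real_inner_smul_left]
  ring

theorem stmt1 (z Ω v : ℝ → EuclideanSpace ℝ (Fin 3)) (ξ : ℝ → ℝ)
    (hz : Differentiable ℝ z)
    (hz0 : ∀ t ≥ (0:ℝ), z t ≠ 0)
    (hzd : ∀ t ≥ (0:ℝ), deriv z t = -cross3 (Ω t) (z t) - v t)
    (y : ℝ → EuclideanSpace ℝ (Fin 3)) (hy : y = fun t => ‖z t‖⁻¹ • z t)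
    (hξ : Differentiable ℝ ξ)
    (hξd : ∀ t ≥ (0:ℝ), deriv ξ t = -⟪y t, v t⟫)
    (θ : ℝ) (hθ : θ = ‖z 0‖ - ξ 0) :
    ∀ t ≥ (0:ℝ), ‖z t‖ - ξ t = θ ∧ z t = (ξ t + θ) • y t := by
  subst hy hθ
  have hderiv : ∀ s ≥ (0:ℝ), HasDerivAt (fun t => ‖z t‖ - ξ t) 0 s := fun s hs => by
    have hnorm := hasDerivAt_norm_of_hasDerivAt_neg_cross3_sub
      (hzd s hs ▸ (hz s).hasDerivAt) (hz0 s hs)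
    have hdiff := hnorm.sub (hξ s).hasDerivAt
    rwa [hξd s hs, sub_self] at hdiff
  intro t ht
  have hconst : ‖z t‖ - ξ t = ‖z 0‖ - ξ 0 :=
    constant_of_has_deriv_right_zero (hz.continuous.norm.sub hξ.continuous).continuousOn
      (fun s hs => (hderiv s hs.1).hasDerivWithinAt) t ⟨ht, le_rfl⟩
  refine ⟨hconst, ?_⟩
  rw [← hconst, add_sub_cancel, smul_smul, mul_inv_cancel₀ (norm_ne_zero_iff.mpr (hz0 t ht)),
    one_smul]
end

section
/- (Swapping lemma, exact ODE form.) Let α > 0 and let x, y : ℝ → ℝ be differentiable. Suppose a, b, c : ℝ → ℝ are differentiable and satisfy for all t ≥ 0: a'(t) = −α a(t) + α x(t) y(t), b'(t) = −α b(t) + α x(t), c'(t) = −α c(t) + y'(t) b(t), together with the initial condition a(0) = y(0) b(0) − c(0). Then a(t) = y(t) b(t) − c(t) for all t ≥ 0. -/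
/-!
The mismatch `e = a - (y b - c)` solves `e' = -α e`: in `a' - y' b - y b' + c'` the forcing
terms `α x y` and `y' b` cancel. Since `e 0 = 0`, Grönwall's inequality forces `e = 0` on `t ≥ 0`.
-/

theorem eq_zero_of_deriv_eq_smul_self {E : Type*} [NormedAddCommGroup E] [NormedSpace ℝ E]
    {e : ℝ → E} {k t₀ : ℝ} (he : Differentiable ℝ e)
    (hde : ∀ t ≥ t₀, deriv e t = k • e t) (h₀ : e t₀ = 0) :
    ∀ t ≥ t₀, e t = 0 := by
  intro t ht
  refine eq_zero_of_abs_deriv_le_mul_abs_self_of_eq_zero_right (K := |k|)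
    he.continuous.continuousOn (fun s _ => (he s).hasDerivAt.hasDerivWithinAt) h₀
    (fun s hs => ?_) t ⟨ht, le_rfl⟩
  rw [hde s hs.1, norm_smul, Real.norm_eq_abs]

theorem stmt3_general (α : ℝ) (x y a b c : ℝ → ℝ)
    (hy : Differentiable ℝ y)
    (ha : Differentiable ℝ a) (hb : Differentiable ℝ b) (hc : Differentiable ℝ c)
    (had : ∀ t ≥ (0:ℝ), deriv a t = -α * a t + α * (x t * y t))
    (hbd : ∀ t ≥ (0:ℝ), deriv b t = -α * b t + α * x t)
    (hcd : ∀ t ≥ (0:ℝ), deriv c t = -α * c t + deriv y t * b t)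
    (h0 : a 0 = y 0 * b 0 - c 0) :
    ∀ t ≥ (0:ℝ), a t = y t * b t - c t := by
  have hmismatch : Differentiable ℝ (a - (y * b - c)) := ha.sub ((hy.mul hb).sub hc)
  have hderiv : ∀ t ≥ (0:ℝ), deriv (a - (y * b - c)) t = -α • (a - (y * b - c)) t := by
    intro t ht
    rw [((ha t).hasDerivAt.sub (((hy t).hasDerivAt.mul (hb t).hasDerivAt).sub
      (hc t).hasDerivAt)).deriv, had t ht, hbd t ht, hcd t ht]
    simp only [Pi.sub_apply, Pi.mul_apply, smul_eq_mul]
    ring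
  intro t ht
  exact sub_eq_zero.mp (eq_zero_of_deriv_eq_smul_self hmismatch hderiv (sub_eq_zero.mpr h0) t ht)

/-- Swapping lemma (Lemma 1), exact ODE form: with state-space realizations
`a` of `(α/(p+α))[x·y]`, `b` of `(α/(p+α))[x]` and `c` of
`(1/(p+α))[ẏ·(α/(p+α))[x]]`, matched initial conditions give
`a = y·b − c` for all `t ≥ 0`. -/
theorem stmt3 (α : ℝ) (hα : 0 < α) (x y a b c : ℝ → ℝ)
    (hx : Differentiable ℝ x) (hy : Differentiable ℝ y)
    (ha : Differentiable ℝ a) (hb : Differentiable ℝ b) (hc : Differentiable ℝ c)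
    (had : ∀ t ≥ (0:ℝ), deriv a t = -α * a t + α * (x t * y t))
    (hbd : ∀ t ≥ (0:ℝ), deriv b t = -α * b t + α * x t)
    (hcd : ∀ t ≥ (0:ℝ), deriv c t = -α * c t + deriv y t * b t)
    (h0 : a 0 = y 0 * b 0 - c 0) :
    ∀ t ≥ (0:ℝ), a t = y t * b t - c t :=
  stmt3_general α x y a b c hy ha hb hc had hbd hcd h0
end

section
/- Let u : ℝ → ℝ be continuous with u(t) ≥ 0 for all t ≥ 0, and suppose there exist T > 0 and δ > 0 such that ∫_t^{t+T} u(s) ds ≥ δ for all t ≥ 0 (persistency of excitation). Let γ > 0 and let x : ℝ → EuclideanSpace ℝ (Fin n) be differentiable with x'(t) = −γ u(t) • x(t) for all t ≥ 0. Then ‖x(t)‖ ≤ ‖x(0)‖ · exp(γδ) · exp(−(γδ/T) t) for all t ≥ 0. -/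
/-!
The integrating factor `exp (∫₀ᵗ a)` turns `ẋ = -a(t) x` into a conserved quantity, so
`x t = exp (-γ ∫₀ᵗ u) • x 0`. Splitting `[0, t]` into `⌊t / T⌋` windows of length `T`, on each of
which `u` integrates to at least `δ`, gives `∫₀ᵗ u ≥ δ (t / T - 1)`.
-/

open MeasureTheory intervalIntegral Set

theorem eq_exp_neg_integral_smul_of_hasDerivAt {E : Type*} [NormedAddCommGroup E]
    [NormedSpace ℝ E] {a : ℝ → ℝ} (ha : Continuous a) {x : ℝ → E}
    (hx : ∀ t ≥ (0:ℝ), HasDerivAt x (-a t • x t) t) :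
    ∀ t ≥ (0:ℝ), x t = Real.exp (-∫ s in (0:ℝ)..t, a s) • x 0 := by
  set A : ℝ → ℝ := fun t => ∫ s in (0:ℝ)..t, a s
  set y : ℝ → E := fun t => Real.exp (A t) • x t
  have hy' : ∀ t ≥ (0:ℝ), HasDerivAt y 0 t := by
    intro t ht
    have hexp : HasDerivAt (fun t => Real.exp (A t)) (Real.exp (A t) * a t) t :=
      (ha.integral_hasStrictDerivAt 0 t).hasDerivAt.exp
    have hy := hexp.smul (hx t ht)
    rwa [smul_smul, ← add_smul, mul_neg, neg_add_cancel, zero_smul] at hy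
  have hy_cont : ContinuousOn y (Ici 0) := fun t ht => (hy' t ht).continuousAt.continuousWithinAt
  intro t ht
  have hyt : y t = y 0 := constant_of_has_deriv_right_zero (hy_cont.mono Icc_subset_Ici_self)
    (fun s hs => (hy' s hs.1).hasDerivWithinAt) t ⟨ht, le_rfl⟩
  simp only [y, A, integral_same, Real.exp_zero, one_smul] at hyt
  rw [← hyt, smul_smul, Real.exp_neg, inv_mul_cancel₀ (Real.exp_pos _).ne', one_smul]

def PersistentlyExciting (u : ℝ → ℝ) (T δ : ℝ) : Prop :=
  ∀ t ≥ (0:ℝ), δ ≤ ∫ s in t..(t + T), u s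

section PersistentlyExciting

variable {u : ℝ → ℝ} {T δ : ℝ}

theorem PersistentlyExciting.nat_mul_le_integral (hPE : PersistentlyExciting u T δ)
    (hu : ∀ a b : ℝ, IntervalIntegrable u volume a b) (hT : 0 ≤ T) (k : ℕ) :
    k * δ ≤ ∫ s in (0:ℝ)..(k * T), u s := by
  induction k with
  | zero => simp
  | succ k ih =>
    have hwindow := hPE (k * T) (by positivity)
    push_cast
    rw [add_one_mul, add_one_mul,
      ← integral_add_adjacent_intervals (hu 0 (k * T)) (hu (k * T) (k * T + T))]
    linarith

theorem PersistentlyExciting.le_integral (hPE : PersistentlyExciting u T δ)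
    (hu : ∀ a b : ℝ, IntervalIntegrable u volume a b) (hu0 : ∀ t ≥ (0:ℝ), 0 ≤ u t)
    (hT : 0 < T) (hδ : 0 ≤ δ) {t : ℝ} (ht : 0 ≤ t) :
    δ * (t / T - 1) ≤ ∫ s in (0:ℝ)..t, u s := by
  set k := ⌊t / T⌋₊
  have hkT : k * T ≤ t := (le_div_iff₀ hT).1 (Nat.floor_le (div_nonneg ht hT.le))
  calc δ * (t / T - 1) ≤ k * δ := by
        nlinarith [Nat.lt_floor_add_one (t / T)]
    _ ≤ ∫ s in (0:ℝ)..(k * T), u s := hPE.nat_mul_le_integral hu hT.le k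
    _ ≤ ∫ s in (0:ℝ)..t, u s :=
        integral_mono_interval le_rfl (by positivity) hkT
          ((ae_restrict_iff' measurableSet_Ioc).2 (.of_forall fun s hs => hu0 s hs.1.le)) (hu 0 t)

end PersistentlyExciting

/-- Exponential stability of `ẋ = −γ u(t) x` for a nonnegative persistently
exciting scalar gain `u`. -/
theorem stmt5 {n : ℕ} (u : ℝ → ℝ) (hu : Continuous u)
    (hu0 : ∀ t ≥ (0:ℝ), 0 ≤ u t)
    (T δ : ℝ) (hT : 0 < T) (hδ : 0 < δ)
    (hPE : ∀ t ≥ (0:ℝ), δ ≤ ∫ s in t..(t + T), u s)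
    (γ : ℝ) (hγ : 0 < γ)
    (x : ℝ → EuclideanSpace ℝ (Fin n)) (hx : Differentiable ℝ x)
    (hxd : ∀ t ≥ (0:ℝ), deriv x t = (-(γ * u t)) • x t) :
    ∀ t ≥ (0:ℝ),
      ‖x t‖ ≤ ‖x 0‖ * Real.exp (γ * δ) * Real.exp (-(γ * δ / T) * t) := by
  intro t ht
  have hsol := eq_exp_neg_integral_smul_of_hasDerivAt (hu.const_mul γ)
    (fun s hs => hxd s hs ▸ (hx s).hasDerivAt) t ht
  have hU : δ * (t / T - 1) ≤ ∫ s in (0:ℝ)..t, u s :=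
    PersistentlyExciting.le_integral hPE (fun _ _ => hu.intervalIntegrable _ _) hu0 hT hδ.le ht
  rw [hsol, norm_smul, Real.norm_of_nonneg (Real.exp_pos _).le,
    intervalIntegral.integral_const_mul, mul_comm, mul_assoc, ← Real.exp_add]
  gcongr
  have hγU := mul_le_mul_of_nonneg_left hU hγ.le
  field_simp at hγU ⊢
  linarith
end

section
/- Let S : ℝ → Matrix (Fin 3) (Fin 3) ℝ satisfy S(t)ᵀ = −S(t) for all t ≥ 0, let R, Q : ℝ → Matrix (Fin 3) (Fin 3) ℝ be differentiable with R'(t) = R(t) * S(t) and Q'(t) = Q(t) * S(t) for all t ≥ 0, and suppose Q(0) * Q(0)ᵀ = 1 (Q(0) is orthogonal). Then Q(t) * Q(t)ᵀ = 1 for all t ≥ 0, and for every g ∈ (Fin 3 → ℝ) and all t ≥ 0, R(t)ᵀ *ᵥ g = Q(t)ᵀ *ᵥ g_c, where g_c := (Q(0) * R(0)ᵀ) *ᵥ g. -/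
/-!
If `F' = F S` and `Q' = Q S` with `S` skew-symmetric, then
`(F Qᵀ)' = F S Qᵀ + F Sᵀ Qᵀ = 0`, so `F Qᵀ` is constant on `[0, ∞)`.
Taking `F = Q` keeps `Q` orthogonal, and taking `F = R` gives `Q Rᵀ = Q(0) R(0)ᵀ`, whence
`Rᵀ = Qᵀ (Q Rᵀ) = Qᵀ (Q(0) R(0)ᵀ)`.
-/

open Matrix

attribute [local instance] Matrix.normedAddCommGroup Matrix.normedSpace

section MatrixCalculus

variable {𝕜 : Type*} [NontriviallyNormedField 𝕜] [CompleteSpace 𝕜] {l m n : Type*}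
  [Fintype l] [Fintype m] [Fintype n]

-- The sup norm on matrices is not submultiplicative, so `HasDerivAt.mul` does not apply;
-- the product rule comes from matrix multiplication as a continuous bilinear map instead.
noncomputable def Matrix.mulCLM : Matrix l m 𝕜 →L[𝕜] Matrix m n 𝕜 →L[𝕜] Matrix l n 𝕜 :=
  LinearMap.toContinuousLinearMap
    (LinearMap.toContinuousLinearMap.toLinearMap ∘ₗ mulLinearMap 𝕜)

theorem HasDerivAt.matrix_mul {f : 𝕜 → Matrix l m 𝕜} {g : 𝕜 → Matrix m n 𝕜}
    {f' : Matrix l m 𝕜} {g' : Matrix m n 𝕜} {t : 𝕜}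
    (hf : HasDerivAt f f' t) (hg : HasDerivAt g g' t) :
    HasDerivAt (fun s => f s * g s) (f' * g t + f t * g') t := by
  rw [add_comm]
  exact Matrix.mulCLM.hasDerivAt_of_bilinear (fun _ => hf) (fun _ => hg)

theorem HasDerivAt.matrix_transpose {f : 𝕜 → Matrix m n 𝕜} {f' : Matrix m n 𝕜} {t : 𝕜}
    (hf : HasDerivAt f f' t) : HasDerivAt (fun s => (f s)ᵀ) f'ᵀ t :=
  (transposeLinearEquiv m n 𝕜 𝕜).toContinuousLinearEquiv.hasFDerivAt.comp_hasDerivAt t hf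

end MatrixCalculus

theorem eq_of_hasDerivAt_eq_zero_of_nonneg {E : Type*} [NormedAddCommGroup E] [NormedSpace ℝ E]
    {f : ℝ → E} (hf : ∀ t ≥ (0 : ℝ), HasDerivAt f 0 t) : ∀ t ≥ (0 : ℝ), f t = f 0 :=
  fun t ht => constant_of_has_deriv_right_zero
    (fun x hx => (hf x hx.1).continuousAt.continuousWithinAt)
    (fun x hx => (hf x hx.1).hasDerivWithinAt) t ⟨ht, le_rfl⟩

theorem mul_transpose_eq_of_hasDerivAt_mul_skew {m n : Type*} [Fintype m] [Fintype n]
    {S Q : ℝ → Matrix n n ℝ} {F : ℝ → Matrix m n ℝ}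
    (hS : ∀ t ≥ (0 : ℝ), (S t)ᵀ = -S t)
    (hF : ∀ t ≥ (0 : ℝ), HasDerivAt F (F t * S t) t)
    (hQ : ∀ t ≥ (0 : ℝ), HasDerivAt Q (Q t * S t) t) :
    ∀ t ≥ (0 : ℝ), F t * (Q t)ᵀ = F 0 * (Q 0)ᵀ := by
  refine eq_of_hasDerivAt_eq_zero_of_nonneg fun t ht => ?_
  have hderiv := (hF t ht).matrix_mul (hQ t ht).matrix_transpose
  rwa [transpose_mul, hS t ht, Matrix.neg_mul, Matrix.mul_neg, Matrix.mul_assoc,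
    add_neg_cancel] at hderiv

/-- Reparameterization of the gravity term (proof of Proposition 4): `Q`
stays orthogonal and `R(t)ᵀ g = Q(t)ᵀ g_c` with the constant vector
`g_c := Q(0) R(0)ᵀ g`. -/
theorem stmt13 (S R Q : ℝ → Matrix (Fin 3) (Fin 3) ℝ)
    (hS : ∀ t ≥ (0:ℝ), (S t)ᵀ = -S t)
    (hR : Differentiable ℝ R) (hQ : Differentiable ℝ Q)
    (hRd : ∀ t ≥ (0:ℝ), deriv R t = R t * S t)
    (hQd : ∀ t ≥ (0:ℝ), deriv Q t = Q t * S t)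
    (hQ0 : Q 0 * (Q 0)ᵀ = 1) :
    ∀ t ≥ (0:ℝ), Q t * (Q t)ᵀ = 1 ∧
      ∀ g : Fin 3 → ℝ, (R t)ᵀ *ᵥ g = (Q t)ᵀ *ᵥ ((Q 0 * (R 0)ᵀ) *ᵥ g) := by
  have hR' : ∀ t ≥ (0:ℝ), HasDerivAt R (R t * S t) t := fun t ht => hRd t ht ▸ (hR t).hasDerivAt
  have hQ' : ∀ t ≥ (0:ℝ), HasDerivAt Q (Q t * S t) t := fun t ht => hQd t ht ▸ (hQ t).hasDerivAt
  intro t ht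
  have hQQ : Q t * (Q t)ᵀ = 1 := by
    rw [mul_transpose_eq_of_hasDerivAt_mul_skew hS hQ' hQ' t ht, hQ0]
  have hRQ : Q t * (R t)ᵀ = Q 0 * (R 0)ᵀ := by
    simpa only [transpose_mul, transpose_transpose] using
      congrArg transpose (mul_transpose_eq_of_hasDerivAt_mul_skew hS hR' hQ' t ht)
  refine ⟨hQQ, fun g => ?_⟩
  rw [← hRQ, mulVec_mulVec, ← Matrix.mul_assoc, mul_eq_one_comm.mp hQQ, Matrix.one_mul]
end
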